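/- Let β > 0 and let V_T(x) = e^{−x} + x − 1. Then for every θ > 0 the function r ↦ e^{−βV_T(r) − θr} is integrable on ℝ with ∫_ℝ e^{−βV_T(r) − θr} dr = e^{β} β^{−(β+θ)} Γ(β+θ), and the normalized expectation satisfies (∫_ℝ r e^{−βV_T(r) − θr} dr)/(∫_ℝ e^{−βV_T(r) − θr} dr) = log β − Γ′(β+θ)/Γ(β+θ). Moreover, there exists exactly one θ > 0 such that this expectation equals 0, i.e. such that Γ′(β+θ)/Γ(β+θ) = log β. -/

import Mathlib

/-!
The substitution `x = β e^{-r}` turns the Gibbs weight `e^{-β V_T(r) - θ r} dr` into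
`e^β β^{-(β+θ)} e^{-x} x^{β+θ-1} dx` on `(0, ∞)` and the observable `r` into `log β - log x`, so
both integrals are Euler integrals: `Γ(β+θ)` and, after differentiating under the integral sign
(the derivative of a Mellin transform), `log β · Γ(β+θ) - Γ'(β+θ)`.

The mean therefore vanishes iff `ψ(β+θ) = log β`, where `ψ = Γ'/Γ` is the derivative of the
convex function `log Γ`. Since `log Γ(β+1) - log Γ(β) = log β`, the mean value theorem gives a
solution in `(β, β+1)`, and it is unique because `ψ` is strictly increasing: it is monotone by
convexity, and `ψ(x) = ψ(x+1) - 1/x`.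
-/

open MeasureTheory Real

noncomputable section

/-- The Toda potential `V_T(x) = e^(-x) + x - 1`. -/
def todaV (x : ℝ) : ℝ := Real.exp (-x) + x - 1

open Set Filter Asymptotics Topology

namespace Real

lemma cpow_smul_log_smul_exp_neg {s t : ℝ} (ht : 0 < t) :
    (t : ℂ) ^ ((s : ℂ) - 1) • ((log t : ℝ) • (rexp (-t) : ℂ)) =
      ((log t * (rexp (-t) * t ^ (s - 1)) : ℝ) : ℂ) := by
  rw [← Complex.ofReal_one, ← Complex.ofReal_sub, ← Complex.ofReal_cpow ht.le, Complex.real_smul,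
    smul_eq_mul]
  push_cast
  ring

lemma mellin_exp_neg_hasDerivAt {s : ℝ} (hs : 0 < s) :
    MellinConvergent (fun t : ℝ => log t • (rexp (-t) : ℂ)) s ∧
      HasDerivAt (mellin fun t : ℝ => (rexp (-t) : ℂ))
        (mellin (fun t : ℝ => log t • (rexp (-t) : ℂ)) s) s := by
  refine mellin_hasDerivAt_of_isBigO_rpow (a := s + 1) (b := 0) ?_ ?_ (by simp) ?_ (by simpa)
  · exact (Continuous.continuousOn (by fun_prop)).locallyIntegrableOn measurableSet_Ioi
  · rw [← isBigO_norm_left]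
    simp_rw [Complex.norm_real, isBigO_norm_left]
    simpa only [neg_one_mul] using (isLittleO_exp_neg_mul_rpow_atTop zero_lt_one _).isBigO
  · simp_rw [neg_zero, rpow_zero]
    refine isBigO_const_of_tendsto (?_ : Tendsto _ _ (𝓝 (1 : ℂ))) one_ne_zero
    rw [(by simp : (1 : ℂ) = rexp (-0))]
    exact (by fun_prop : Continuous fun t : ℝ => (rexp (-t) : ℂ)).continuousWithinAt

theorem integrableOn_log_mul_Gamma_integrand {s : ℝ} (hs : 0 < s) :
    IntegrableOn (fun t => log t * (rexp (-t) * t ^ (s - 1))) (Ioi 0) := by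
  have hre := ((mellin_exp_neg_hasDerivAt hs).1.congr_fun
    (fun t ht => cpow_smul_log_smul_exp_neg ht) measurableSet_Ioi).re
  simp only [RCLike.re_to_complex, Complex.ofReal_re] at hre
  exact hre

theorem hasDerivAt_Gamma_integral_log {s : ℝ} (hs : 0 < s) :
    HasDerivAt Gamma (∫ t in Ioi 0, log t * (rexp (-t) * t ^ (s - 1))) s := by
  have hGamma : HasDerivAt Complex.Gamma
      (mellin (fun t : ℝ => log t • (rexp (-t) : ℂ)) s) s := by
    refine ((mellin_exp_neg_hasDerivAt hs).2.congr_of_eventuallyEq ?_)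
    filter_upwards [(isOpen_lt continuous_const Complex.continuous_re).mem_nhds
      (by simpa using hs)] with z hz
    rw [Complex.Gamma_eq_integral hz, Complex.GammaIntegral_eq_mellin]
  have hval : mellin (fun t : ℝ => log t • (rexp (-t) : ℂ)) s =
      ((∫ t in Ioi 0, log t * (rexp (-t) * t ^ (s - 1)) : ℝ) : ℂ) := by
    rw [mellin, setIntegral_congr_fun measurableSet_Ioi fun t ht => cpow_smul_log_smul_exp_neg ht]
    exact integral_ofReal
  rw [hval] at hGamma
  have hre := hGamma.real_of_complex
  rw [Complex.ofReal_re] at hre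
  exact hre

theorem hasDerivAt_log_Gamma {x : ℝ} (hx : 0 < x) :
    HasDerivAt (log ∘ Gamma) (logDeriv Gamma x) x :=
  (differentiableOn_Gamma_Ioi.differentiableAt (Ioi_mem_nhds hx)).hasDerivAt.log
    (Gamma_pos_of_pos hx).ne'

theorem logDeriv_Gamma_add_one {x : ℝ} (hx : 0 < x) :
    logDeriv Gamma (x + 1) = logDeriv Gamma x + 1 / x := by
  have hshift : logDeriv Gamma (x + 1) = logDeriv (fun y => Gamma (y + 1)) x := by
    rw [← Function.comp_def, logDeriv_comp _ (differentiableAt_id.add_const 1)]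
    · simp
    · exact differentiableOn_Gamma_Ioi.differentiableAt (Ioi_mem_nhds (by linarith))
  have hrec : (fun y => Gamma (y + 1)) =ᶠ[𝓝 x] fun y => y * Gamma y := by
    filter_upwards [eventually_gt_nhds hx] with y hy using Gamma_add_one hy.ne'
  rw [hshift, (logDeriv_congr_nhds hrec).eq_of_nhds, logDeriv_mul (f := fun y => y) x hx.ne'
    (Gamma_pos_of_pos hx).ne' differentiableAt_fun_id
    (differentiableOn_Gamma_Ioi.differentiableAt (Ioi_mem_nhds hx)), logDeriv_id', add_comm]

theorem monotoneOn_logDeriv_Gamma : MonotoneOn (logDeriv Gamma) (Ioi 0) := by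
  intro x hx y hy hxy
  rcases hxy.eq_or_lt with rfl | hxy
  · rfl
  have hleft := convexOn_log_Gamma.deriv_le_slope hx hy hxy
    (hasDerivAt_log_Gamma hx).differentiableAt
  have hright := convexOn_log_Gamma.slope_le_deriv hx hy hxy
    (hasDerivAt_log_Gamma hy).differentiableAt
  rw [(hasDerivAt_log_Gamma hx).deriv] at hleft
  rw [(hasDerivAt_log_Gamma hy).deriv] at hright
  exact hleft.trans hright

theorem strictMonoOn_logDeriv_Gamma : StrictMonoOn (logDeriv Gamma) (Ioi 0) := by
  intro x (hx : 0 < x) y (hy : 0 < y) hxy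
  calc logDeriv Gamma x = logDeriv Gamma (x + 1) - 1 / x := by
        rw [logDeriv_Gamma_add_one hx]; ring
    _ < logDeriv Gamma (y + 1) - 1 / y := by
        have hshift : logDeriv Gamma (x + 1) ≤ logDeriv Gamma (y + 1) :=
          monotoneOn_logDeriv_Gamma (mem_Ioi.2 (by linarith)) (mem_Ioi.2 (by linarith))
            (by linarith)
        linarith [one_div_lt_one_div_of_lt hx hxy]
    _ = logDeriv Gamma y := by rw [logDeriv_Gamma_add_one hy]; ring

theorem exists_logDeriv_Gamma_eq_log {x : ℝ} (hx : 0 < x) :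
    ∃ c ∈ Ioo x (x + 1), logDeriv Gamma c = log x := by
  obtain ⟨c, hc, hslope⟩ := exists_hasDerivAt_eq_slope (log ∘ Gamma) (logDeriv Gamma)
    (lt_add_one x)
    (fun y hy => (hasDerivAt_log_Gamma (hx.trans_le hy.1)).continuousAt.continuousWithinAt)
    fun y hy => hasDerivAt_log_Gamma (hx.trans hy.1)
  refine ⟨c, hc, ?_⟩
  rw [hslope, Function.comp_apply, Function.comp_apply, Gamma_add_one hx.ne',
    log_mul hx.ne' (Gamma_pos_of_pos hx).ne']
  ring

end Real

section ExpNegSubstitution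

variable {E : Type*} [NormedAddCommGroup E] [NormedSpace ℝ E]

lemma image_univ_exp_neg : (fun r : ℝ => rexp (-r)) '' univ = Ioi 0 := by
  rw [image_univ, ← Function.comp_def, range_comp, neg_surjective.range_eq, image_univ, range_exp]

lemma hasDerivWithinAt_exp_neg_univ (r : ℝ) :
    HasDerivWithinAt (fun r : ℝ => rexp (-r)) (-rexp (-r)) univ r := by
  simpa using (hasDerivAt_neg r).exp

theorem integral_exp_neg_smul_comp_exp_neg (g : ℝ → E) :
    ∫ r, rexp (-r) • g (rexp (-r)) = ∫ x in Ioi 0, g x := by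
  rw [← image_univ_exp_neg, integral_image_eq_integral_abs_deriv_smul MeasurableSet.univ
    (fun r _ => hasDerivWithinAt_exp_neg_univ r) (exp_injective.comp neg_injective).injOn g]
  simp [abs_of_pos (exp_pos _)]

theorem integrable_exp_neg_smul_comp_exp_neg_iff (g : ℝ → E) :
    Integrable (fun r => rexp (-r) • g (rexp (-r))) ↔ IntegrableOn g (Ioi 0) := by
  rw [← image_univ_exp_neg, integrableOn_image_iff_integrableOn_abs_deriv_smul MeasurableSet.univ
    (fun r _ => hasDerivWithinAt_exp_neg_univ r) (exp_injective.comp neg_injective).injOn g]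
  simp [abs_of_pos (exp_pos _)]

end ExpNegSubstitution

section TodaGibbsWeight

variable {β θ : ℝ}

lemma toda_weight_add_log (hβ : 0 < β) (r : ℝ) :
    rexp (-β * todaV (r + log β) - θ * (r + log β)) =
      rexp β * β ^ (-(β + θ)) * (rexp (-r) * (rexp (-rexp (-r)) * rexp (-r) ^ (β + θ - 1))) := by
  have hpot : β * rexp (-(r + log β)) = rexp (-r) := by
    rw [neg_add, exp_add, exp_neg (log β), exp_log hβ]
    field_simp
  rw [rpow_def_of_pos hβ, ← exp_mul, ← exp_add, ← exp_add, ← exp_add, ← exp_add, todaV]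
  congr 1
  linear_combination -hpot

lemma toda_weight_add_log_eq_smul (hβ : 0 < β) :
    (fun r => rexp (-β * todaV (r + log β) - θ * (r + log β))) = fun r =>
      rexp (-r) • (rexp β * β ^ (-(β + θ)) * (rexp (-rexp (-r)) * rexp (-r) ^ (β + θ - 1))) := by
  ext r
  rw [toda_weight_add_log hβ, smul_eq_mul]
  ring

lemma mul_toda_weight_add_log_eq_smul (hβ : 0 < β) :
    (fun r => (r + log β) * rexp (-β * todaV (r + log β) - θ * (r + log β))) = fun r =>
      rexp (-r) • (rexp β * β ^ (-(β + θ)) * ((log β - log (rexp (-r))) *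
        (rexp (-rexp (-r)) * rexp (-r) ^ (β + θ - 1)))) := by
  ext r
  rw [toda_weight_add_log hβ, smul_eq_mul, log_exp]
  ring

theorem integrable_toda_weight (hβ : 0 < β) (hs : 0 < β + θ) :
    Integrable fun r => rexp (-β * todaV r - θ * r) := by
  have hshift : Integrable fun r => rexp (-β * todaV (r + log β) - θ * (r + log β)) := by
    rw [toda_weight_add_log_eq_smul hβ, integrable_exp_neg_smul_comp_exp_neg_iff
      (fun x => rexp β * β ^ (-(β + θ)) * (rexp (-x) * x ^ (β + θ - 1)))]
    exact (GammaIntegral_convergent hs).const_mul _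
  simpa using hshift.comp_add_right (-log β)

theorem integral_toda_weight (hβ : 0 < β) (hs : 0 < β + θ) :
    ∫ r, rexp (-β * todaV r - θ * r) = rexp β * β ^ (-(β + θ)) * Gamma (β + θ) := by
  rw [← integral_add_right_eq_self _ (log β), toda_weight_add_log_eq_smul hβ,
    integral_exp_neg_smul_comp_exp_neg
      (fun x => rexp β * β ^ (-(β + θ)) * (rexp (-x) * x ^ (β + θ - 1))),
    integral_const_mul, Gamma_eq_integral hs]

theorem integral_mul_toda_weight (hβ : 0 < β) (hs : 0 < β + θ) :
    ∫ r, r * rexp (-β * todaV r - θ * r) =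
      rexp β * β ^ (-(β + θ)) * (log β * Gamma (β + θ) - deriv Gamma (β + θ)) := by
  rw [← integral_add_right_eq_self (fun r => r * rexp (-β * todaV r - θ * r)) (log β),
    mul_toda_weight_add_log_eq_smul hβ, integral_exp_neg_smul_comp_exp_neg
      (fun x => rexp β * β ^ (-(β + θ)) * ((log β - log x) * (rexp (-x) * x ^ (β + θ - 1)))),
    integral_const_mul, (hasDerivAt_Gamma_integral_log hs).deriv, Gamma_eq_integral hs]
  simp_rw [sub_mul]
  rw [integral_sub ((GammaIntegral_convergent hs).const_mul _)
    (integrableOn_log_mul_Gamma_integrand hs), integral_const_mul]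

theorem toda_mean_eq (hβ : 0 < β) (hs : 0 < β + θ) :
    (∫ r, r * rexp (-β * todaV r - θ * r)) / ∫ r, rexp (-β * todaV r - θ * r) =
      log β - deriv Gamma (β + θ) / Gamma (β + θ) := by
  have hΓ : Gamma (β + θ) ≠ 0 := (Gamma_pos_of_pos hs).ne'
  have hβs : β ^ (-(β + θ)) ≠ 0 := (rpow_pos_of_pos hβ _).ne'
  rw [integral_mul_toda_weight hβ hs, integral_toda_weight hβ hs]
  field_simp

end TodaGibbsWeight

/-- for `β > 0` and `θ > 0`, `r ↦ e^(-β V_T(r) - θ r)` is integrable with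
integral `e^β β^(-(β+θ)) Γ(β+θ)`, the normalized expectation of `r` equals
`log β - Γ'(β+θ)/Γ(β+θ)`, and there is exactly one `θ > 0` making this expectation zero. -/
theorem toda_partition_function_and_unique_theta (β : ℝ) (hβ : 0 < β) :
    (∀ θ : ℝ, 0 < θ →
      Integrable (fun r : ℝ => Real.exp (-β * todaV r - θ * r)) ∧
      (∫ r : ℝ, Real.exp (-β * todaV r - θ * r)) =
        Real.exp β * β ^ (-(β + θ)) * Real.Gamma (β + θ) ∧
      (∫ r : ℝ, r * Real.exp (-β * todaV r - θ * r)) /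
          (∫ r : ℝ, Real.exp (-β * todaV r - θ * r)) =
        Real.log β - deriv Real.Gamma (β + θ) / Real.Gamma (β + θ)) ∧
    ∃! θ : ℝ, 0 < θ ∧
      (∫ r : ℝ, r * Real.exp (-β * todaV r - θ * r)) /
          (∫ r : ℝ, Real.exp (-β * todaV r - θ * r)) = 0 := by
  refine ⟨fun θ hθ => ⟨integrable_toda_weight hβ (by linarith), integral_toda_weight hβ
    (by linarith), toda_mean_eq hβ (by linarith)⟩, ?_⟩
  obtain ⟨c, ⟨hβc, -⟩, hc⟩ := exists_logDeriv_Gamma_eq_log hβ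
  refine ⟨c - β, ⟨sub_pos.2 hβc, ?_⟩, ?_⟩
  · rw [toda_mean_eq hβ (by linarith), add_sub_cancel, ← logDeriv_apply, hc, sub_self]
  · rintro θ ⟨hθ, hmean⟩
    rw [toda_mean_eq hβ (by linarith), sub_eq_zero, ← logDeriv_apply] at hmean
    have hβθ : β + θ = c := strictMonoOn_logDeriv_Gamma.injOn (mem_Ioi.2 (by linarith))
      (mem_Ioi.2 (by linarith)) (hmean.symm.trans hc.symm)
    linarith
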